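/- The group of label-preserving automorphisms of the labeled Möbius ladder M4 (horizontal edges alternately labeled ℓ and t, rungs labeled 𝓛) acts transitively on its set of two type-3 Hamiltonian cycles. -/

import Mathlib

open SimpleGraph

/-- The Möbius ladder on 8 vertices: cycle edges `{i, i+1}` and rungs `{i, i+4}`. -/
def M4 : SimpleGraph (Fin 8) :=
  SimpleGraph.fromRel (fun i j => j = i + 1 ∨ j = i + 4)

/-- An edge of `M4` is a rung if it has the form `{i, i+4}`. -/
def IsRung (e : Sym2 (Fin 8)) : Prop := ∃ i : Fin 8, e = s(i, i + 4)

/-- An edge of `M4` is horizontal if it has the form `{i, i+1}`. -/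
def IsHorizontal (e : Sym2 (Fin 8)) : Prop := ∃ i : Fin 8, e = s(i, i + 1)

/-- `E` is the edge set of a Hamiltonian cycle of `M4`. -/
def IsHamEdgeSet (E : Set (Sym2 (Fin 8))) : Prop :=
  ∃ (v : Fin 8) (w : M4.Walk v v), w.IsHamiltonianCycle ∧ E = {e | e ∈ w.edges}

/-- Horizontal edges `{i, i+1}` with `i` even carry the label `ℓ`. -/
def IsLEdge (e : Sym2 (Fin 8)) : Prop := ∃ i : Fin 8, Even i.val ∧ e = s(i, i + 1)

/-- Horizontal edges `{i, i+1}` with `i` odd carry the label `t`. -/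
def IsTEdge (e : Sym2 (Fin 8)) : Prop := ∃ i : Fin 8, Odd i.val ∧ e = s(i, i + 1)

/-- Two edges share a vertex. -/
def ShareVertex (e f : Sym2 (Fin 8)) : Prop := ∃ v : Fin 8, v ∈ e ∧ v ∈ f

/-- A Hamiltonian cycle of `M4` is of type 3 if every `t`-labeled edge on the cycle is
adjacent along the cycle to both an `ℓ`-labeled edge and an `𝓛`-labeled edge (a rung). -/
def IsType3 (E : Set (Sym2 (Fin 8))) : Prop :=
  IsHamEdgeSet E ∧ ∀ e ∈ E, IsTEdge e →
    (∃ f ∈ E, f ≠ e ∧ ShareVertex e f ∧ IsLEdge f) ∧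
    (∃ f ∈ E, f ≠ e ∧ ShareVertex e f ∧ IsRung f)

/-- Two edges carry the same label among `ℓ`, `t`, `𝓛`. -/
def SameLabel (e f : Sym2 (Fin 8)) : Prop :=
  (IsLEdge e ↔ IsLEdge f) ∧ (IsTEdge e ↔ IsTEdge f) ∧ (IsRung e ↔ IsRung f)

/-! ### Auxiliary material -/

instance : DecidableRel M4.Adj := fun a b =>
  decidable_of_iff' _ (SimpleGraph.fromRel_adj _ a b)

instance : DecidablePred IsRung := fun e =>
  inferInstanceAs (Decidable (∃ i : Fin 8, e = s(i, i + 4)))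
instance : DecidablePred IsLEdge := fun e =>
  inferInstanceAs (Decidable (∃ i : Fin 8, Even i.val ∧ e = s(i, i + 1)))
instance : DecidablePred IsTEdge := fun e =>
  inferInstanceAs (Decidable (∃ i : Fin 8, Odd i.val ∧ e = s(i, i + 1)))
instance : ∀ e f, Decidable (ShareVertex e f) := fun e f =>
  inferInstanceAs (Decidable (∃ v : Fin 8, v ∈ e ∧ v ∈ f))

/-- All 12 edges of `M4`. -/
def allE : Finset (Sym2 (Fin 8)) :=
  {s(0,1), s(1,2), s(2,3), s(3,4), s(4,5), s(5,6), s(6,7), s(7,0),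
   s(0,4), s(1,5), s(2,6), s(3,7)}

/-- The disconnected 2-regular type-3 candidate. -/
def C0 : Finset (Sym2 (Fin 8)) :=
  {s(0,1), s(2,3), s(4,5), s(6,7), s(0,4), s(1,5), s(2,6), s(3,7)}

/-- The first type-3 Hamiltonian cycle. -/
def C1 : Finset (Sym2 (Fin 8)) :=
  {s(0,1), s(1,2), s(2,6), s(5,6), s(4,5), s(3,4), s(3,7), s(7,0)}

/-- The second type-3 Hamiltonian cycle. -/
def C2 : Finset (Sym2 (Fin 8)) :=
  {s(0,4), s(7,0), s(1,2), s(1,5), s(2,3), s(3,4), s(5,6), s(6,7)}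

lemma rot_adj : ∀ c a b : Fin 8, M4.Adj (a + c) (b + c) ↔ M4.Adj a b := by decide

/-- Rotation by `c` as an automorphism of `M4`. -/
def rot (c : Fin 8) : M4 ≃g M4 :=
  ⟨Equiv.addRight c, fun {a b} => rot_adj c a b⟩

set_option maxRecDepth 40000 in
lemma classify_aux : ∀ F ∈ allE.powersetCard 8,
    (∀ u : Fin 8, 2 ≤ (F.filter (fun e => u ∈ e)).card) →
    (∀ e ∈ F, IsTEdge e →
      (∃ f ∈ F, f ≠ e ∧ ShareVertex e f ∧ IsLEdge f) ∧
      (∃ f ∈ F, f ≠ e ∧ ShareVertex e f ∧ IsRung f)) →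
    F = C0 ∨ F = C1 ∨ F = C2 := by decide

/-- Every walk of positive length ends with an edge into its endpoint. -/
lemma exists_last_edge {V : Type*} {G : SimpleGraph V} {x y : V} (p : G.Walk x y)
    (hp : 0 < p.length) : ∃ z, s(z, y) ∈ p.edges := by
  induction p with
  | nil => simp at hp
  | @cons a b c h q ih =>
    rcases Nat.eq_zero_or_pos q.length with h0 | hpos
    · have hbc : b = c := q.eq_of_length_eq_zero h0
      subst hbc
      exact ⟨a, by simp⟩
    · obtain ⟨z, hz⟩ := ih hpos
      exact ⟨z, by simp [hz]⟩

/-- A cycle has at least two edges through its base point. -/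
lemma deg_ge_aux {V : Type*} [DecidableEq V] {G : SimpleGraph V} {u : V} {q : G.Walk u u}
    (hq : q.IsCycle) : 2 ≤ (q.edges.toFinset.filter (fun e => u ∈ e)).card := by
  have h3 := hq.three_le_length
  cases q with
  | nil => simp at h3
  | @cons _ b _ h p =>
    have hppos : 0 < p.length := by
      simp only [SimpleGraph.Walk.length_cons] at h3; omega
    obtain ⟨z, hz⟩ := exists_last_edge p hppos
    have hnd : (SimpleGraph.Walk.cons h p).edges.Nodup := hq.isCircuit.isTrail.edges_nodup
    rw [SimpleGraph.Walk.edges_cons, List.nodup_cons] at hnd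
    have hne : s(z, u) ≠ s(u, b) := fun hh => hnd.1 (hh ▸ hz)
    have hsub : ({s(u,b), s(z,u)} : Finset (Sym2 V)) ⊆
        (SimpleGraph.Walk.cons h p).edges.toFinset.filter (fun e => u ∈ e) := by
      intro e he
      rcases Finset.mem_insert.mp he with rfl | he
      · simp
      · rw [Finset.mem_singleton.mp he]
        simp [hz]
    calc 2 = ({s(u,b), s(z,u)} : Finset (Sym2 V)).card := by
            rw [Finset.card_pair (Ne.symm hne)]
      _ ≤ _ := Finset.card_le_card hsub

/-- component indicator for `C0`. -/
def comp (v : Fin 8) : Bool := v.val % 4 ≤ 1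

lemma compC0 : ∀ a b : Fin 8, s(a, b) ∈ C0 → comp a = comp b := by decide

lemma walk_comp : ∀ {a b : Fin 8} (p : M4.Walk a b), (∀ e ∈ p.edges, e ∈ C0) → comp a = comp b := by
  intro a b p
  induction p with
  | nil => intro _; rfl
  | @cons a c b h q ih =>
    intro he
    exact (compC0 a c (he _ (by simp))).trans (ih fun e hee => he e (by simp [hee]))

lemma mem_allE : ∀ a b : Fin 8, M4.Adj a b → s(a, b) ∈ allE := by decide

/-- Classification of type-3 Hamiltonian cycles. -/
lemma type3_classify {E : Set (Sym2 (Fin 8))} (h : IsType3 E) : E = ↑C1 ∨ E = ↑C2 := by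
  obtain ⟨⟨v, w, hw, hE⟩, ht3⟩ := h
  have hEF : E = ↑w.edges.toFinset := by
    rw [hE]; ext e; simp
  set F := w.edges.toFinset with hF
  have hsub : F ⊆ allE := by
    intro e he
    have hmem : e ∈ M4.edgeSet := w.edges_subset_edgeSet (List.mem_toFinset.mp he)
    induction e using Sym2.ind with
    | _ a b => exact mem_allE a b (M4.mem_edgeSet.mp hmem)
  have hcard : F.card = 8 := by
    rw [hF, List.toFinset_card_of_nodup hw.isCycle.isCircuit.isTrail.edges_nodup,
      SimpleGraph.Walk.length_edges, hw.length_eq, Fintype.card_fin]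
  have hmemP : F ∈ allE.powersetCard 8 := Finset.mem_powersetCard.mpr ⟨hsub, hcard⟩
  have hdeg : ∀ u : Fin 8, 2 ≤ (F.filter (fun e => u ∈ e)).card := by
    intro u
    have hu : u ∈ w.support := hw.mem_support u
    have hqc : (w.rotate u hu).IsCycle := hw.isCycle.rotate hu
    have hfin : (w.rotate u hu).edges.toFinset = F := by
      ext e; simp [hF, List.mem_toFinset, (w.rotate_edges u hu).perm.mem_iff]
    have := deg_ge_aux hqc
    rwa [hfin] at this
  have ht3' : ∀ e ∈ F, IsTEdge e →
      (∃ f ∈ F, f ≠ e ∧ ShareVertex e f ∧ IsLEdge f) ∧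
      (∃ f ∈ F, f ≠ e ∧ ShareVertex e f ∧ IsRung f) := by
    rw [hEF] at ht3
    intro e he het
    obtain ⟨⟨f1, hf1, hh1⟩, ⟨f2, hf2, hh2⟩⟩ := ht3 e (Finset.mem_coe.mpr he) het
    exact ⟨⟨f1, Finset.mem_coe.mp hf1, hh1⟩, ⟨f2, Finset.mem_coe.mp hf2, hh2⟩⟩
  rcases classify_aux F hmemP hdeg ht3' with h0 | h1 | h2
  · exfalso
    have h2s : (2 : Fin 8) ∈ w.support.tail := by
      have hc := (SimpleGraph.Walk.isHamiltonianCycle_iff_isCycle_and_support_count_tail_eq_one.mp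
        hw).2 2
      by_contra hnot
      rw [List.count_eq_zero_of_not_mem hnot] at hc
      simp at hc
    have h0s : (0 : Fin 8) ∈ w.support := hw.mem_support 0
    have hq2 : (2 : Fin 8) ∈ (w.rotate 0 h0s).support :=
      List.mem_of_mem_tail ((w.support_rotate 0 h0s).mem_iff.mpr h2s)
    have hpe : ∀ e ∈ ((w.rotate 0 h0s).takeUntil 2 hq2).edges, e ∈ C0 := by
      intro e he
      have h1 : e ∈ (w.rotate 0 h0s).edges :=
        SimpleGraph.Walk.edges_takeUntil_subset _ _ he
      have h2' : e ∈ w.edges := (w.rotate_edges 0 h0s).perm.mem_iff.mp h1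
      have hFm : e ∈ F := List.mem_toFinset.mpr h2'
      rwa [h0] at hFm
    have := walk_comp ((w.rotate 0 h0s).takeUntil 2 hq2) hpe
    exact absurd this (by decide)
  · left; rw [hEF, h1]
  · right; rw [hEF, h2]

instance : ∀ e f, Decidable (SameLabel e f) := fun e f =>
  inferInstanceAs (Decidable ((IsLEdge e ↔ IsLEdge f) ∧ (IsTEdge e ↔ IsTEdge f) ∧
    (IsRung e ↔ IsRung f)))

lemma label0 : ∀ e : Sym2 (Fin 8), SameLabel e (Sym2.map ⇑(rot 0) e) := by decide
lemma label2 : ∀ e : Sym2 (Fin 8), SameLabel e (Sym2.map ⇑(rot 2) e) := by decide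
lemma label6 : ∀ e : Sym2 (Fin 8), SameLabel e (Sym2.map ⇑(rot 6) e) := by decide

lemma img10 : C1.image (Sym2.map ⇑(rot 0)) = C1 := by decide
lemma img20 : C2.image (Sym2.map ⇑(rot 0)) = C2 := by decide
lemma img12 : C1.image (Sym2.map ⇑(rot 2)) = C2 := by decide
lemma img26 : C2.image (Sym2.map ⇑(rot 6)) = C1 := by decide

/-- The label-preserving automorphisms of `M4` act transitively on the set of (two)
type-3 Hamiltonian cycles. -/
theorem label_preserving_aut_transitive_on_type3
    (E₁ E₂ : Set (Sym2 (Fin 8))) (h₁ : IsType3 E₁) (h₂ : IsType3 E₂) :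
    ∃ φ : M4 ≃g M4, (∀ e : Sym2 (Fin 8), SameLabel e (Sym2.map ⇑φ e)) ∧
      E₂ = Sym2.map ⇑φ '' E₁ := by
  rcases type3_classify h₁ with hA | hA <;> rcases type3_classify h₂ with hB | hB
  · exact ⟨rot 0, label0, by rw [hA, hB, ← Finset.coe_image, img10]⟩
  · exact ⟨rot 2, label2, by rw [hA, hB, ← Finset.coe_image, img12]⟩
  · exact ⟨rot 6, label6, by rw [hA, hB, ← Finset.coe_image, img26]⟩
  · exact ⟨rot 0, label0, by rw [hA, hB, ← Finset.coe_image, img20]⟩
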